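/- Let Γ be a group, h : Γ → ℤ a group homomorphism, α a nonzero complex number, n ≥ 2, and z_1, …, z_{n−1} : Γ → ℂ arbitrary maps. Define ϱ(γ) as the n×n matrix with ϱ(γ)_{1,1} = α^{h(γ)}, ϱ(γ)_{1,j} = z_{j−1}(γ) for 2 ≤ j ≤ n, ϱ(γ)_{i,1} = 0 for 2 ≤ i ≤ n, and ϱ(γ)_{i,j} = (J_{n−1}^{h(γ)})_{i−1,j−1} for 2 ≤ i, j ≤ n. Then ϱ : Γ → GL(n,ℂ) is a group homomorphism if and only if for each 1 ≤ k ≤ n−1 and all γ₁, γ₂ ∈ Γ: z_k(γ₁γ₂) = z_k(γ₁) + α^{h(γ₁)} z_k(γ₂) + Σ_{i=1}^{k−1} z_i(γ₁) h_{k−i}(γ₂), i.e. δz_k + Σ_{i=1}^{k−1} z_i ⌣ h_{k−i} = 0. -/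

import Mathlib

open Matrix

noncomputable section

/-- Generalized binomial coefficient C(m,k) for m : ℤ, as a complex number. -/
def gbinom (m : ℤ) (k : ℕ) : ℂ :=
  (∏ i ∈ Finset.range k, ((m : ℂ) - i)) / (Nat.factorial k)

/-- The n×n nilpotent Jordan matrix N. -/
def Nmat (n : ℕ) : Matrix (Fin n) (Fin n) ℂ :=
  Matrix.of fun i j => if (i : ℕ) + 1 = (j : ℕ) then 1 else 0

/-- The unipotent Jordan block J = I + N. -/
def Jmat (n : ℕ) : Matrix (Fin n) (Fin n) ℂ := 1 + Nmat n

lemma Jmat_blockTriangular (n : ℕ) : (Jmat n).BlockTriangular id := by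
  intro i j hij
  have hji : (j : ℕ) < (i : ℕ) := hij
  simp only [Jmat, Matrix.add_apply, Matrix.one_apply, Nmat, Matrix.of_apply]
  rw [if_neg (by intro h; subst h; exact lt_irrefl _ hji), if_neg (by omega)]
  simp

lemma Jmat_isUnit (n : ℕ) : IsUnit (Jmat n) := by
  rw [Matrix.isUnit_iff_isUnit_det,
    Matrix.det_of_upperTriangular (Jmat_blockTriangular n)]
  have : ∀ i : Fin n, Jmat n i i = 1 := by
    intro i
    simp [Jmat, Matrix.one_apply, Nmat]
  simp [this]

/-- Integer powers (positive and negative) of the unipotent Jordan block. -/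
def Jz (n : ℕ) (m : ℤ) : Matrix (Fin n) (Fin n) ℂ :=
  (((Jmat_isUnit n).unit ^ m : (Matrix (Fin n) (Fin n) ℂ)ˣ) : Matrix (Fin n) (Fin n) ℂ)


/-- The candidate representation ϱ : block matrix with (1,1)-entry `α^{h(γ)}`,
first-row tail `(z_1(γ),…,z_{n−1}(γ))`, lower-right block `J_{n−1}^{h(γ)}`, zeros below
(the cochains `z_k`, `1 ≤ k ≤ n−1`, are encoded as `z : Γ → ℕ → ℂ`). -/
def RhoBlock (Γ : Type*) (α : ℂ) (m : ℕ) (h : Γ → ℤ) (z : Γ → ℕ → ℂ) (γ : Γ) :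
    Matrix (Fin 1 ⊕ Fin m) (Fin 1 ⊕ Fin m) ℂ :=
  Matrix.fromBlocks (Matrix.of fun _ _ => α ^ h γ)
    (Matrix.of fun _ j => z γ ((j : ℕ) + 1))
    0 (Jz m (h γ))

/-! The entries of `J^t` are the binomial coefficients `C(t, j - i)`: this holds for `t = 0`,
Pascal's rule carries it from `t` to `t + 1` (right multiplication by `J`), and invertibility of
`J` carries it back from `t + 1` to `t`. Multiplying out the blocks, the diagonal blocks of
`ϱ(γ₁)ϱ(γ₂)` agree with those of `ϱ(γ₁γ₂)` because `h` is additive and `α ≠ 0`, while the first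
row of the product is, entry by entry, the right-hand side of the cocycle relation. -/

lemma gbinom_eq_choose (m : ℤ) (k : ℕ) : gbinom m k = Ring.choose (m : ℂ) k := by
  have h := Ring.descPochhammer_eq_factorial_smul_choose (m : ℂ) k
  rw [← Polynomial.aeval_eq_smeval, Polynomial.aeval_def, Polynomial.eval₂_eq_eval_map,
    descPochhammer_map, descPochhammer_eval_eq_prod_range,
    nsmul_eq_mul] at h
  rw [gbinom, h, mul_div_cancel_left₀ _ (Nat.cast_ne_zero.mpr k.factorial_ne_zero)]

lemma gbinom_zero_right (m : ℤ) : gbinom m 0 = 1 := by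
  simp [gbinom]

lemma gbinom_zero_succ (k : ℕ) : gbinom 0 (k + 1) = 0 := by
  simp [gbinom_eq_choose]

lemma gbinom_succ_succ (m : ℤ) (k : ℕ) :
    gbinom (m + 1) (k + 1) = gbinom m k + gbinom m (k + 1) := by
  simp only [gbinom_eq_choose]
  push_cast
  exact Ring.choose_succ_succ _ _

def binomMatrix (n : ℕ) (m : ℤ) : Matrix (Fin n) (Fin n) ℂ :=
  Matrix.of fun i j => if i ≤ j then gbinom m ((j : ℕ) - i) else 0

lemma binomMatrix_zero (n : ℕ) : binomMatrix n 0 = 1 := by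
  ext i j
  rcases lt_trichotomy i j with hij | rfl | hij
  · obtain ⟨k, hk⟩ := Nat.exists_eq_add_of_lt hij
    simp [binomMatrix, hij.le, hij.ne, show (j : ℕ) - i = k + 1 by omega, gbinom_zero_succ]
  · simp [binomMatrix, gbinom_zero_right]
  · simp [binomMatrix, hij.not_ge, hij.ne']

lemma mul_Nmat_apply {n : ℕ} (A : Matrix (Fin n) (Fin n) ℂ) (i j : Fin n) :
    (A * Nmat n) i j = if h : (j : ℕ) = 0 then 0 else A i ⟨j - 1, by omega⟩ := by
  rw [Matrix.mul_apply]
  split_ifs with hj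
  · refine Finset.sum_eq_zero fun l _ => ?_
    simp [Nmat, hj]
  · rw [Finset.sum_eq_single ⟨j - 1, by omega⟩]
    · simp [Nmat, show (j : ℕ) - 1 + 1 = j by omega]
    · intro l _ hl
      simp only [Nmat, Matrix.of_apply, mul_ite, mul_one, mul_zero, ite_eq_right_iff]
      exact fun hlj => absurd (Fin.ext (show (l : ℕ) = j - 1 by omega)) hl
    · simp

lemma binomMatrix_mul_Jmat (n : ℕ) (m : ℤ) :
    binomMatrix n m * Jmat n = binomMatrix n (m + 1) := by
  ext i j
  rw [Jmat, Matrix.mul_add, Matrix.mul_one, Matrix.add_apply, mul_Nmat_apply]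
  simp only [binomMatrix, Matrix.of_apply, Fin.le_def]
  split_ifs with hij hj hij' hij'
  · rw [show (j : ℕ) - i = 0 by omega, add_zero, gbinom_zero_right, gbinom_zero_right]
  · rw [show (j : ℕ) - i = (j - 1 - i) + 1 by omega, gbinom_succ_succ, add_comm]
  · rw [show (j : ℕ) - i = 0 by omega, add_zero, gbinom_zero_right, gbinom_zero_right]
  all_goals first | omega | simp

lemma Units.val_zpow_eq_of_mul_eq {M : Type*} [Monoid M] (u : Mˣ) (f : ℤ → M)
    (h0 : f 0 = 1) (hsucc : ∀ t, f t * u = f (t + 1)) (t : ℤ) : ((u ^ t : Mˣ) : M) = f t := by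
  induction t using Int.induction_on with
  | zero => simp [h0]
  | succ k ih => rw [_root_.zpow_add_one, Units.val_mul, ih, hsucc]
  | pred k ih =>
    rw [← Units.mul_left_inj u, ← Units.val_mul, ← _root_.zpow_add_one, hsucc, sub_add_cancel, ih]

lemma Jz_eq_binomMatrix (n : ℕ) (m : ℤ) : Jz n m = binomMatrix n m :=
  Units.val_zpow_eq_of_mul_eq _ _ (binomMatrix_zero n)
    (fun t => by rw [IsUnit.unit_spec, binomMatrix_mul_Jmat]) m

lemma Jz_add (n : ℕ) (a b : ℤ) : Jz n (a + b) = Jz n a * Jz n b := by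
  rw [Jz, Jz, Jz, _root_.zpow_add, Units.val_mul]

lemma sum_mul_binomMatrix {n : ℕ} (w : ℕ → ℂ) (m : ℤ) (j : Fin n) :
    ∑ l : Fin n, w (l + 1) * binomMatrix n m l j
      = w (j + 1) + ∑ i ∈ Finset.Icc 1 (j : ℕ), w i * gbinom m (j + 1 - i) := by
  have hsupport : (Finset.range n).filter (· ≤ (j : ℕ)) = Finset.range (j + 1) := by
    ext l
    simp only [Finset.mem_filter, Finset.mem_range]
    omega
  simp only [binomMatrix, Matrix.of_apply, Fin.le_def, mul_ite, mul_zero]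
  rw [Fin.sum_univ_eq_sum_range (fun l => if l ≤ (j : ℕ) then w (l + 1) * gbinom m (j - l) else 0),
    ← Finset.sum_filter, hsupport, Finset.sum_range_succ, Nat.sub_self, gbinom_zero_right, mul_one, add_comm,
    ← Finset.Ico_add_one_right_eq_Icc, Finset.sum_Ico_eq_sum_range, Nat.add_sub_cancel]
  refine congrArg _ (Finset.sum_congr rfl fun l _ => ?_)
  rw [add_comm 1 l, show (j : ℕ) + 1 - (l + 1) = j - l by omega]

lemma RhoBlock_eq_mul_iff {Γ : Type*} {α : ℂ} (hα : α ≠ 0) (m : ℕ) {h : Γ → ℤ} (z : Γ → ℕ → ℂ)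
    {γ γ₁ γ₂ : Γ} (hγ : h γ = h γ₁ + h γ₂) :
    RhoBlock Γ α m h z γ = RhoBlock Γ α m h z γ₁ * RhoBlock Γ α m h z γ₂ ↔
      ∀ j : Fin m, z γ (j + 1) = z γ₁ (j + 1) + α ^ h γ₁ * z γ₂ (j + 1)
        + ∑ i ∈ Finset.Icc 1 (j : ℕ), z γ₁ i * gbinom (h γ₂) (j + 1 - i) := by
  have hcorner : (of fun _ _ => α ^ h γ : Matrix (Fin 1) (Fin 1) ℂ)
      = (of fun _ _ => α ^ h γ₁) * (of fun _ _ => α ^ h γ₂) := by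
    ext
    simp [Matrix.mul_apply, hγ, zpow_add₀ hα]
  rw [RhoBlock, RhoBlock, RhoBlock, fromBlocks_multiply, fromBlocks_inj]
  simp only [Matrix.mul_zero, Matrix.zero_mul, add_zero, zero_add, ← Jz_add, ← hγ, ← hcorner,
    and_true, true_and]
  rw [← Matrix.ext_iff, Unique.forall_iff]
  refine forall_congr' fun j => ?_
  simp only [Matrix.add_apply, Matrix.mul_apply, of_apply, Fin.sum_univ_one, Jz_eq_binomMatrix,
    sum_mul_binomMatrix, add_left_comm (α ^ h γ₁ * _), ← add_assoc]

theorem stmt8_general (Γ : Type*) [Group Γ] (h : Γ → ℤ)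
    (hh : ∀ a b : Γ, h (a * b) = h a + h b)
    (α : ℂ) (hα : α ≠ 0) (n : ℕ) (z : Γ → ℕ → ℂ) :
    (∀ γ₁ γ₂ : Γ,
        RhoBlock Γ α (n - 1) h z (γ₁ * γ₂)
          = RhoBlock Γ α (n - 1) h z γ₁ * RhoBlock Γ α (n - 1) h z γ₂)
    ↔ (∀ k : ℕ, 1 ≤ k → k ≤ n - 1 → ∀ γ₁ γ₂ : Γ,
        z (γ₁ * γ₂) k
          = z γ₁ k + α ^ h γ₁ * z γ₂ k
            + ∑ i ∈ Finset.Icc 1 (k - 1), z γ₁ i * gbinom (h γ₂) (k - i)) := by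
  simp only [RhoBlock_eq_mul_iff hα _ z (hh _ _)]
  constructor
  · intro H k hk1 hk2 γ₁ γ₂
    obtain ⟨j, rfl⟩ : ∃ j, k = j + 1 := ⟨k - 1, by omega⟩
    exact H γ₁ γ₂ ⟨j, by omega⟩
  · intro H γ₁ γ₂ j
    exact H (j + 1) (by omega) (by omega) γ₁ γ₂

/-- ϱ is a group homomorphism into GL(n,ℂ) if and only if, for each `1 ≤ k ≤ n−1`,
`z_k(γ₁γ₂) = z_k(γ₁) + α^{h(γ₁)} z_k(γ₂) + Σ_{i=1}^{k−1} z_i(γ₁) h_{k−i}(γ₂)`,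
i.e. `δz_k + Σ_{i=1}^{k−1} z_i ⌣ h_{k−i} = 0`. -/
theorem stmt8 (Γ : Type*) [Group Γ] (h : Γ → ℤ)
    (hh : ∀ a b : Γ, h (a * b) = h a + h b)
    (α : ℂ) (hα : α ≠ 0) (n : ℕ) (hn : 2 ≤ n) (z : Γ → ℕ → ℂ) :
    (∀ γ₁ γ₂ : Γ,
        RhoBlock Γ α (n - 1) h z (γ₁ * γ₂)
          = RhoBlock Γ α (n - 1) h z γ₁ * RhoBlock Γ α (n - 1) h z γ₂)
    ↔ (∀ k : ℕ, 1 ≤ k → k ≤ n - 1 → ∀ γ₁ γ₂ : Γ,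
        z (γ₁ * γ₂) k
          = z γ₁ k + α ^ h γ₁ * z γ₂ k
            + ∑ i ∈ Finset.Icc 1 (k - 1), z γ₁ i * gbinom (h γ₂) (k - i)) :=
  stmt8_general Γ h hh α hα n z

end
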